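/- The function N(z,t) = (|z|⁴ + t²)^{−1/2} (the inverse square of the Korányi norm) is harmonic for the Heisenberg sublaplacian away from the origin: for every (z,t) ∈ ℂ×ℝ with (z,t) ≠ (0,0), X(X N)(z,t) + Y(Y N)(z,t) = 0. (This expresses that a constant multiple of |·|_K^{−2} is the fundamental solution of −Δ_b on H¹.) -/

import Mathlib

/-!
For a positive function `Q` and any vector field `D`, the chain rule gives
`D²(Q^c) = c(c-1) Q^(c-2) (DQ)² + c Q^(c-1) D²Q`. For the Korányi quartic `Q = |z|⁴ + t²` the
Heisenberg fields satisfy `(XQ)² + (YQ)² = 16|z|²Q` and `X²Q + Y²Q = 24|z|²`, so at `c = -1/2`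
both terms of `X²N + Y²N` equal `±12|z|² Q^(-3/2)` and cancel.
-/

open MeasureTheory Real

/-- The left-invariant Heisenberg vector field `X f = ∂f/∂x + 2y ∂f/∂t`. -/
noncomputable def heisX (f : ℂ × ℝ → ℝ) (p : ℂ × ℝ) : ℝ :=
  fderiv ℝ f p ((1 : ℂ), (0 : ℝ)) + 2 * p.1.im * fderiv ℝ f p ((0 : ℂ), (1 : ℝ))

/-- The left-invariant Heisenberg vector field `Y f = ∂f/∂y − 2x ∂f/∂t`. -/
noncomputable def heisY (f : ℂ × ℝ → ℝ) (p : ℂ × ℝ) : ℝ :=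
  fderiv ℝ f p (Complex.I, (0 : ℝ)) - 2 * p.1.re * fderiv ℝ f p ((0 : ℂ), (1 : ℝ))

/-- The inverse square of the Korányi norm: `N(z,t) = (|z|⁴ + t²)^{-1/2}`. -/
noncomputable def koranyiInvSq (p : ℂ × ℝ) : ℝ :=
  (‖p.1‖ ^ 4 + p.2 ^ 2) ^ (-(1 / 2 : ℝ))

open Filter Topology

section derivAlong

variable {E : Type*} [NormedAddCommGroup E] [NormedSpace ℝ E] {V : E → E} {f g : E → ℝ} {x : E}

noncomputable def derivAlong (V : E → E) (f : E → ℝ) (x : E) : ℝ := fderiv ℝ f x (V x)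

theorem Filter.EventuallyEq.derivAlong_eq (h : f =ᶠ[𝓝 x] g) :
    derivAlong V f x = derivAlong V g x := by
  rw [derivAlong, derivAlong, h.fderiv_eq]

theorem derivAlong_mul (hf : DifferentiableAt ℝ f x) (hg : DifferentiableAt ℝ g x) :
    derivAlong V (fun y => f y * g y) x = f x * derivAlong V g x + g x * derivAlong V f x := by
  simp [derivAlong, fderiv_fun_mul hf hg]

theorem derivAlong_const_mul (c : ℝ) (hf : DifferentiableAt ℝ f x) :
    derivAlong V (fun y => c * f y) x = c * derivAlong V f x := by
  simp [derivAlong, fderiv_const_mul hf]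

theorem derivAlong_rpow_const {c : ℝ} (hf : DifferentiableAt ℝ f x) (hx : f x ≠ 0) :
    derivAlong V (fun y => f y ^ c) x = c * f x ^ (c - 1) * derivAlong V f x := by
  simp [derivAlong, (hf.hasFDerivAt.rpow_const (p := c) (Or.inl hx)).fderiv]

theorem derivAlong_derivAlong_rpow_const {c : ℝ} (hf : ∀ᶠ y in 𝓝 x, DifferentiableAt ℝ f y)
    (hx : f x ≠ 0) (hVf : DifferentiableAt ℝ (derivAlong V f) x) :
    derivAlong V (derivAlong V fun y => f y ^ c) x =
      c * (c - 1) * f x ^ (c - 2) * derivAlong V f x ^ 2 +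
        c * f x ^ (c - 1) * derivAlong V (derivAlong V f) x := by
  have hfx : DifferentiableAt ℝ f x := hf.self_of_nhds
  have hne : ∀ᶠ y in 𝓝 x, f y ≠ 0 := hfx.continuousAt.eventually_ne hx
  have hfirst : derivAlong V (fun y => f y ^ c) =ᶠ[𝓝 x]
      fun y => (c * f y ^ (c - 1)) * derivAlong V f y := by
    filter_upwards [hf, hne] with y hfy hy using derivAlong_rpow_const hfy hy
  have hpow : DifferentiableAt ℝ (fun y => f y ^ (c - 1)) x := hfx.rpow_const (Or.inl hx)
  rw [hfirst.derivAlong_eq, derivAlong_mul (hpow.const_mul c) hVf, derivAlong_const_mul c hpow,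
    derivAlong_rpow_const hfx hx, show c - 1 - 1 = c - 2 by ring]
  ring

end derivAlong

theorem fderiv_re_fst {F : Type*} [NormedAddCommGroup F] [NormedSpace ℝ F] (p v : ℂ × F) :
    fderiv ℝ (fun q : ℂ × F => q.1.re) p v = v.1.re := by
  have h : HasFDerivAt (fun q : ℂ × F => q.1.re) (Complex.reCLM.comp (.fst ℝ ℂ F)) p :=
    (Complex.reCLM.comp (.fst ℝ ℂ F)).hasFDerivAt
  rw [h.fderiv]
  rfl

theorem fderiv_im_fst {F : Type*} [NormedAddCommGroup F] [NormedSpace ℝ F] (p v : ℂ × F) :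
    fderiv ℝ (fun q : ℂ × F => q.1.im) p v = v.1.im := by
  have h : HasFDerivAt (fun q : ℂ × F => q.1.im) (Complex.imCLM.comp (.fst ℝ ℂ F)) p :=
    (Complex.imCLM.comp (.fst ℝ ℂ F)).hasFDerivAt
  rw [h.fderiv]
  rfl

def heisXField (p : ℂ × ℝ) : ℂ × ℝ := (1, 2 * p.1.im)

def heisYField (p : ℂ × ℝ) : ℂ × ℝ := (Complex.I, -(2 * p.1.re))

theorem heisX_eq_derivAlong : heisX = derivAlong heisXField := by
  funext f p
  have hv : heisXField p = ((1 : ℂ), (0 : ℝ)) + (2 * p.1.im) • ((0 : ℂ), (1 : ℝ)) := by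
    simp [heisXField]
  rw [derivAlong, hv, map_add, map_smul, heisX, smul_eq_mul]

theorem heisY_eq_derivAlong : heisY = derivAlong heisYField := by
  funext f p
  have hv : heisYField p = (Complex.I, (0 : ℝ)) + (-(2 * p.1.re)) • ((0 : ℂ), (1 : ℝ)) := by
    simp [heisYField]
  rw [derivAlong, hv, map_add, map_smul, heisY, smul_eq_mul]
  ring

noncomputable def koranyiQuartic (p : ℂ × ℝ) : ℝ := ‖p.1‖ ^ 4 + p.2 ^ 2

theorem koranyiInvSq_eq_rpow : koranyiInvSq = fun p => koranyiQuartic p ^ (-(1 / 2 : ℝ)) := rfl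

theorem koranyiQuartic_pos {p : ℂ × ℝ} (hp : p ≠ 0) : 0 < koranyiQuartic p := by
  rcases eq_or_ne p.1 0 with hz | hz
  · have ht : p.2 ≠ 0 := fun ht => hp (Prod.ext hz ht)
    rw [koranyiQuartic, hz, norm_zero]
    positivity
  · have := norm_pos_iff.2 hz
    rw [koranyiQuartic]
    positivity

theorem koranyiQuartic_eq_re_im :
    koranyiQuartic = fun p => (p.1.re ^ 2 + p.1.im ^ 2) ^ 2 + p.2 ^ 2 := by
  funext p
  rw [koranyiQuartic, show ‖p.1‖ ^ 4 = (‖p.1‖ ^ 2) ^ 2 by ring, Complex.sq_norm,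
    Complex.normSq_apply]
  ring

theorem differentiable_koranyiQuartic : Differentiable ℝ koranyiQuartic := by
  rw [koranyiQuartic_eq_re_im]
  fun_prop

theorem heisX_koranyiQuartic :
    heisX koranyiQuartic = fun p => 4 * ((p.1.re ^ 2 + p.1.im ^ 2) * p.1.re + p.1.im * p.2) := by
  funext p
  simp (disch := fun_prop) [heisX, koranyiQuartic_eq_re_im, fderiv_fun_add, fderiv_fun_pow,
    fderiv_re_fst, fderiv_im_fst, fderiv_snd]
  ring

theorem heisY_koranyiQuartic :
    heisY koranyiQuartic = fun p => 4 * ((p.1.re ^ 2 + p.1.im ^ 2) * p.1.im - p.1.re * p.2) := by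
  funext p
  simp (disch := fun_prop) [heisY, koranyiQuartic_eq_re_im, fderiv_fun_add, fderiv_fun_pow,
    fderiv_re_fst, fderiv_im_fst, fderiv_snd]
  ring

theorem heisX_heisX_koranyiQuartic (p : ℂ × ℝ) :
    heisX (heisX koranyiQuartic) p = 12 * (p.1.re ^ 2 + p.1.im ^ 2) := by
  simp (disch := fun_prop) [heisX_koranyiQuartic, heisX, fderiv_fun_add, fderiv_fun_pow,
    fderiv_fun_mul, fderiv_re_fst, fderiv_im_fst, fderiv_snd]
  ring

theorem heisY_heisY_koranyiQuartic (p : ℂ × ℝ) :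
    heisY (heisY koranyiQuartic) p = 12 * (p.1.re ^ 2 + p.1.im ^ 2) := by
  simp (disch := fun_prop) [heisY_koranyiQuartic, heisY, fderiv_fun_add, fderiv_fun_sub,
    fderiv_fun_pow, fderiv_fun_mul, fderiv_re_fst, fderiv_im_fst, fderiv_snd]
  ring

theorem sq_heisX_add_sq_heisY_koranyiQuartic (p : ℂ × ℝ) :
    heisX koranyiQuartic p ^ 2 + heisY koranyiQuartic p ^ 2 =
      16 * (p.1.re ^ 2 + p.1.im ^ 2) * koranyiQuartic p := by
  rw [heisX_koranyiQuartic, heisY_koranyiQuartic, koranyiQuartic_eq_re_im]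
  ring

/-- `N(z,t) = (|z|⁴ + t²)^{-1/2}` is harmonic for the Heisenberg
sublaplacian away from the origin: `X(XN) + Y(YN) = 0` at every `(z,t) ≠ (0,0)`. -/
theorem koranyiInvSq_harmonic :
    ∀ p : ℂ × ℝ, p ≠ (0, 0) →
      heisX (heisX koranyiInvSq) p + heisY (heisY koranyiInvSq) p = 0 := by
  intro p hp
  set Q := koranyiQuartic p
  have hQ : Q ≠ 0 := (koranyiQuartic_pos hp).ne'
  have hdiff : ∀ᶠ q in 𝓝 p, DifferentiableAt ℝ koranyiQuartic q :=
    .of_forall differentiable_koranyiQuartic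
  have hX := derivAlong_derivAlong_rpow_const (V := heisXField) (c := -(1 / 2))
    hdiff hQ (by rw [← heisX_eq_derivAlong, heisX_koranyiQuartic]; fun_prop)
  have hY := derivAlong_derivAlong_rpow_const (V := heisYField) (c := -(1 / 2))
    hdiff hQ (by rw [← heisY_eq_derivAlong, heisY_koranyiQuartic]; fun_prop)
  rw [← heisX_eq_derivAlong, ← koranyiInvSq_eq_rpow] at hX
  rw [← heisY_eq_derivAlong, ← koranyiInvSq_eq_rpow] at hY
  have hpow : Q ^ (-(1 / 2 : ℝ) - 2) * Q = Q ^ (-(1 / 2 : ℝ) - 1) := by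
    rw [← rpow_add_one hQ]
    norm_num
  rw [hX, hY, heisX_heisX_koranyiQuartic, heisY_heisY_koranyiQuartic]
  linear_combination (3 / 4 * Q ^ (-(1 / 2 : ℝ) - 2)) * sq_heisX_add_sq_heisY_koranyiQuartic p
    + 12 * (p.1.re ^ 2 + p.1.im ^ 2) * hpow
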